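/- Let (M,d) be a sequentially compact, chain-connected metric space and let f : M → ℝ be continuous. If f(w) < c < f(v) for some points w, v ∈ M and some real number c, then there exists u ∈ M with f(u) = c. -/

import Mathlib

/-!
A sequentially compact metric space is compact, so two disjoint closed subsets of it lie at
positive distance `ε`. An `ε`-chain from a point of a clopen set to a point outside it would
have to jump from the set to its complement in one step, so a chain-connected compact space is
connected, and the classical intermediate value theorem for connected spaces applies.
-/

open Set

def ChainConnected (M : Type*) [PseudoMetricSpace M] : Prop :=
  ∀ w v : M, ∀ ε : ℝ, 0 < ε → ∃ n : ℕ, ∃ x : ℕ → M,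
    x 0 = w ∧ x n = v ∧ ∀ i < n, dist (x i) (x (i + 1)) < ε

theorem Nat.exists_lt_and_not_succ_of_not {p : ℕ → Prop} {n : ℕ} (h0 : p 0) (hn : ¬p n) :
    ∃ i < n, p i ∧ ¬p (i + 1) := by
  induction n with
  | zero => exact absurd h0 hn
  | succ n ih =>
    by_cases h : p n
    · exact ⟨n, n.lt_succ_self, h, hn⟩
    · obtain ⟨i, hi, hpi⟩ := ih h
      exact ⟨i, hi.trans n.lt_succ_self, hpi⟩

theorem IsCompact.exists_pos_forall_lt_dist {M : Type*} [PseudoMetricSpace M] {s t : Set M}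
    (hs : IsCompact s) (ht : IsClosed t) (hst : Disjoint s t) :
    ∃ ε > 0, ∀ x ∈ s, ∀ y ∈ t, ε < dist x y := by
  obtain ⟨r, hr, hlt⟩ := Metric.exists_pos_forall_lt_edist hs ht hst
  refine ⟨r, hr, fun x hx y hy => ?_⟩
  have := hlt x hx y hy
  rwa [edist_dist, ← ENNReal.ofReal_coe_nnreal,
    ENNReal.ofReal_lt_ofReal_iff_of_nonneg r.coe_nonneg] at this

theorem ChainConnected.preconnectedSpace {M : Type*} [PseudoMetricSpace M] [CompactSpace M]
    (hM : ChainConnected M) : PreconnectedSpace M := by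
  refine preconnectedSpace_iff_clopen.mpr fun s hs => ?_
  by_contra! hne
  obtain ⟨w, hw⟩ := hne.1
  obtain ⟨v, hv⟩ := (ne_univ_iff_exists_notMem s).mp hne.2
  obtain ⟨ε, hε, hsep⟩ :=
    hs.isClosed.isCompact.exists_pos_forall_lt_dist hs.isOpen.isClosed_compl disjoint_compl_right
  obtain ⟨n, x, rfl, rfl, hstep⟩ := hM w v ε hε
  obtain ⟨i, hin, hxi, hxi'⟩ := Nat.exists_lt_and_not_succ_of_not (p := (x · ∈ s)) hw hv
  exact (hsep _ hxi _ hxi').not_gt (hstep i hin)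

/-- Intermediate value theorem for sequentially compact, chain-connected metric spaces. -/
theorem stmt0 {M : Type*} [MetricSpace M]
    (hseq : ∀ u : ℕ → M, ∃ x : M, ∃ φ : ℕ → ℕ, StrictMono φ ∧
      Filter.Tendsto (u ∘ φ) Filter.atTop (nhds x))
    (hchain : ∀ w v : M, ∀ ε : ℝ, 0 < ε → ∃ n : ℕ, ∃ x : ℕ → M,
      x 0 = w ∧ x n = v ∧ ∀ i < n, dist (x i) (x (i + 1)) < ε)
    (f : M → ℝ) (hf : Continuous f)
    (w v : M) (c : ℝ) (h1 : f w < c) (h2 : c < f v) :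
    ∃ u : M, f u = c := by
  have : CompactSpace M := compactSpace_iff_seqCompactSpace.mpr
    ⟨fun u _ => let ⟨x, φ, hφ, hu⟩ := hseq u; ⟨x, mem_univ x, φ, hφ, hu⟩⟩
  have : PreconnectedSpace M := ChainConnected.preconnectedSpace hchain
  exact intermediate_value_univ w v hf ⟨h1.le, h2.le⟩
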